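/- arXiv:2303.00970 — 4 statements merged into one kernel-verified Lean document; each statement's English description precedes it below -/
import Mathlib

section
/- (Holley–Stroock perturbation) Let p be a probability density on ℝ^d satisfying the log-Sobolev inequality with constant α > 0, and let H : ℝ^d → ℝ be a bounded measurable function. Define the probability density p_H(θ) = exp(H(θ)) p(θ) / E_p[exp(H)]. Then p_H satisfies the log-Sobolev inequality with constant α · exp(−4‖H‖_∞). -/
open MeasureTheory Real

noncomputable section

abbrev E (d : ℕ) := EuclideanSpace ℝ (Fin d)

def IsDensity {d : ℕ} (p : E d → ℝ) : Prop :=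
  Measurable p ∧ (∀ θ, 0 ≤ p θ) ∧ ∫ θ, p θ = 1

def SatisfiesLSI {d : ℕ} (p : E d → ℝ) (α : ℝ) : Prop :=
  ∀ g : E d → ℝ, Differentiable ℝ g →
    Integrable (fun θ => p θ * (g θ) ^ 2) →
    Integrable (fun θ => p θ * ‖gradient g θ‖ ^ 2) →
    (∫ θ, p θ * ((g θ) ^ 2 * Real.log ((g θ) ^ 2)))
      - (∫ θ, p θ * (g θ) ^ 2) * Real.log (∫ θ, p θ * (g θ) ^ 2)
      ≤ (2 / α) * ∫ θ, p θ * ‖gradient g θ‖ ^ 2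

lemma hs_mul_log_ineq {x t : ℝ} (hx : 0 ≤ x) (ht : 0 < t) :
    x - t ≤ x * Real.log x - x * Real.log t := by
  rcases eq_or_lt_of_le hx with h | h
  · simp [← h]; linarith
  · have h1 : Real.log (t / x) ≤ t / x - 1 := Real.log_le_sub_one_of_pos (by positivity)
    rw [Real.log_div (ne_of_gt ht) (ne_of_gt h)] at h1
    have h2 := mul_le_mul_of_nonneg_left h1 (le_of_lt h)
    have hx' : x * (t / x) = t := by field_simp
    nlinarith

lemma hs_integrable_of_integral_eq_one {d : ℕ} {p : E d → ℝ} (h : ∫ θ, p θ = 1) :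
    Integrable p := by
  by_contra hni
  rw [integral_undef hni] at h
  norm_num at h

lemma hs_grad_norm {d : ℕ} (g : E d → ℝ) (θ : E d) :
    ‖gradient g θ‖ = ‖fderiv ℝ g θ‖ := by
  simp only [gradient]
  exact LinearIsometryEquiv.norm_map _ _

lemma hs_grad_meas {d : ℕ} (g : E d → ℝ) :
    Measurable (fun θ => ‖gradient g θ‖ ^ 2) := by
  have : (fun θ => ‖gradient g θ‖ ^ 2) = fun θ => ‖fderiv ℝ g θ‖ ^ 2 := by
    funext θ; rw [hs_grad_norm]
  rw [this]
  exact ((measurable_fderiv ℝ g).norm).pow_const 2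

lemma hs_grad_const_mul {d : ℕ} {g : E d → ℝ} (hg : Differentiable ℝ g) (c : ℝ) (θ : E d) :
    ‖gradient (fun x => c * g x) θ‖ ^ 2 = c ^ 2 * ‖gradient g θ‖ ^ 2 := by
  rw [hs_grad_norm, hs_grad_norm, fderiv_const_mul (hg θ) c, norm_smul]
  simp [mul_pow, sq_abs]

lemma hs_integrable_of_le_mul {d : ℕ} {q r : E d → ℝ} (hq : AEStronglyMeasurable q volume)
    (C : ℝ) (hr : Integrable r) (hbound : ∀ θ, ‖q θ‖ ≤ C * r θ) : Integrable q :=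
  (hr.const_mul C).mono' hq (Filter.Eventually.of_forall hbound)

/-- Key step: under LSI with the given integrability assumptions, the entropy integrand is
integrable. Proven by applying the LSI to `c • g` for small `c`. -/
lemma hs_entropy_integrable {d : ℕ} {α : ℝ} (hα : 0 < α) {p : E d → ℝ}
    (hpm : Measurable p) (hpn : ∀ θ, 0 ≤ p θ) (hLSI : SatisfiesLSI p α)
    {g : E d → ℝ} (hg : Differentiable ℝ g)
    (h1 : Integrable (fun θ => p θ * (g θ) ^ 2))
    (h2 : Integrable (fun θ => p θ * ‖gradient g θ‖ ^ 2)) :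
    Integrable (fun θ => p θ * ((g θ) ^ 2 * Real.log ((g θ) ^ 2))) := by
  by_contra hni
  set a := ∫ θ, p θ * (g θ) ^ 2 with ha_def
  have ha_nonneg : 0 ≤ a := integral_nonneg (fun θ => mul_nonneg (hpn θ) (sq_nonneg _))
  have ha_pos : 0 < a := by
    rcases lt_or_eq_of_le ha_nonneg with h | h
    · exact h
    · exfalso
      have hz : (fun θ => p θ * (g θ) ^ 2) =ᵐ[volume] 0 := by
        rw [← integral_eq_zero_iff_of_nonneg (fun θ => mul_nonneg (hpn θ) (sq_nonneg _)) h1]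
        exact h.symm
      apply hni
      apply (integrable_zero _ _ _).congr
      filter_upwards [hz] with θ hθ
      simp only [Pi.zero_apply] at hθ
      rcases mul_eq_zero.mp hθ with h' | h'
      · simp [h']
      · simp [h']
  -- pick the scaling constant
  set K := (2 / α) * ∫ θ, p θ * ‖gradient g θ‖ ^ 2 with hK_def
  set t := (-(K + 1) / a - Real.log a) / 2 with ht_def
  set c := Real.exp t with hc_def
  have hc_pos : 0 < c := Real.exp_pos t
  have hc2_pos : 0 < c ^ 2 := by positivity
  set gc := fun θ => c * g θ with hgc_def
  have hgc : Differentiable ℝ gc := hg.const_mul c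
  have hsq : ∀ θ, (gc θ) ^ 2 = c ^ 2 * (g θ) ^ 2 := fun θ => by simp [hgc_def]; ring
  have heq1 : (fun θ => p θ * (gc θ) ^ 2) = fun θ => c ^ 2 * (p θ * (g θ) ^ 2) := by
    funext θ; rw [hsq]; ring
  have hint1c : Integrable (fun θ => p θ * (gc θ) ^ 2) := by
    rw [heq1]; exact h1.const_mul _
  have heqg : (fun θ => p θ * ‖gradient gc θ‖ ^ 2)
      = fun θ => c ^ 2 * (p θ * ‖gradient g θ‖ ^ 2) := by
    funext θ; rw [hgc_def, hs_grad_const_mul hg c θ]; ring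
  have hint2c : Integrable (fun θ => p θ * ‖gradient gc θ‖ ^ 2) := by
    rw [heqg]; exact h2.const_mul _
  -- the entropy integrand for gc is also non-integrable
  have hnic : ¬ Integrable (fun θ => p θ * ((gc θ) ^ 2 * Real.log ((gc θ) ^ 2))) := by
    intro hcon
    apply hni
    have hkey : (fun θ => p θ * ((g θ) ^ 2 * Real.log ((g θ) ^ 2)))
        = fun θ => (c ^ 2)⁻¹ * (p θ * ((gc θ) ^ 2 * Real.log ((gc θ) ^ 2))
            - (c ^ 2 * Real.log (c ^ 2)) * (p θ * (g θ) ^ 2)) := by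
      funext θ
      rcases eq_or_ne (g θ) 0 with h | h
      · simp [hgc_def, h]
      · rw [hsq, Real.log_mul (by positivity) (by positivity)]
        field_simp
        ring
    rw [hkey]
    exact ((hcon.sub (h1.const_mul _)).const_mul _)
  have hzero : (∫ θ, p θ * ((gc θ) ^ 2 * Real.log ((gc θ) ^ 2))) = 0 := integral_undef hnic
  have hLSIc := hLSI gc hgc hint1c hint2c
  rw [hzero] at hLSIc
  have hac : (∫ θ, p θ * (gc θ) ^ 2) = c ^ 2 * a := by
    rw [heq1, integral_const_mul]
  rw [hac, heqg, integral_const_mul] at hLSIc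
  -- hLSIc : 0 - c^2*a * log (c^2*a) ≤ (2/α) * (c^2 * ∫ ...)
  have hlog : Real.log (c ^ 2 * a) = 2 * t + Real.log a := by
    rw [Real.log_mul (by positivity) (ne_of_gt ha_pos), hc_def, ← Real.exp_nat_mul]
    · norm_num [Real.log_exp]
  rw [hlog] at hLSIc
  have h2t : 2 * t = -(K + 1) / a - Real.log a := by rw [ht_def]; ring
  have hfin : c ^ 2 * (K + 1) ≤ c ^ 2 * K := by
    have : a * (2 * t + Real.log a) = -(K + 1) := by
      rw [h2t]; field_simp; ring
    nlinarith [hLSIc]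
  nlinarith [hc2_pos]
/-- Holley–Stroock perturbation: if `p` satisfies LSI with constant `α` and
`H` is bounded measurable, then `p_H = e^H p / E_p[e^H]` satisfies LSI with
constant `α · exp(−4‖H‖_∞)`. -/
theorem holley_stroock (d : ℕ) (α : ℝ) (hα : 0 < α)
    (p : E d → ℝ) (hp : IsDensity p) (hLSI : SatisfiesLSI p α)
    (H : E d → ℝ) (hH_meas : Measurable H) (hH_bdd : ∃ B : ℝ, ∀ θ, |H θ| ≤ B)
    (pH : E d → ℝ)
    (hpH : ∀ θ, pH θ = Real.exp (H θ) * p θ / ∫ θ', Real.exp (H θ') * p θ') :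
    SatisfiesLSI pH (α * Real.exp (-4 * ⨆ θ, |H θ|)) := by
  obtain ⟨hpm, hpn, hpint1⟩ := hp
  obtain ⟨B₀, hB₀⟩ := hH_bdd
  set B := ⨆ θ, |H θ| with hB_def
  have hbdd : BddAbove (Set.range fun θ => |H θ|) := ⟨B₀, by rintro y ⟨θ, rfl⟩; exact hB₀ θ⟩
  have hB : ∀ θ, |H θ| ≤ B := fun θ => le_ciSup hbdd θ
  have hB0 : 0 ≤ B := le_trans (abs_nonneg _) (hB 0)
  set C := Real.exp (2 * B) with hC_def
  have hC_nonneg : 0 ≤ C := (Real.exp_pos _).le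
  have hp_int : Integrable p := hs_integrable_of_integral_eq_one hpint1
  set Z := ∫ θ', Real.exp (H θ') * p θ' with hZ_def
  have heHp_meas : Measurable (fun θ => Real.exp (H θ) * p θ) := hH_meas.exp.mul hpm
  have heHp_int : Integrable (fun θ => Real.exp (H θ) * p θ) :=
    hs_integrable_of_le_mul heHp_meas.aestronglyMeasurable (Real.exp B) hp_int (fun θ => by
      rw [Real.norm_eq_abs, abs_of_nonneg (mul_nonneg (Real.exp_pos _).le (hpn θ))]
      exact mul_le_mul_of_nonneg_right
        (Real.exp_le_exp.2 ((le_abs_self _).trans (hB θ))) (hpn θ))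
  have hZ_ge : Real.exp (-B) ≤ Z := by
    have h := integral_mono (hp_int.const_mul (Real.exp (-B))) heHp_int
      (fun θ => mul_le_mul_of_nonneg_right
        (Real.exp_le_exp.2 (neg_le_of_abs_le (hB θ))) (hpn θ))
    rwa [integral_const_mul, hpint1, mul_one] at h
  have hZ_le : Z ≤ Real.exp B := by
    have h := integral_mono heHp_int (hp_int.const_mul (Real.exp B))
      (fun θ => mul_le_mul_of_nonneg_right
        (Real.exp_le_exp.2 (le_of_abs_le (hB θ))) (hpn θ))
    rwa [integral_const_mul, hpint1, mul_one] at h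
  have hZ_pos : 0 < Z := lt_of_lt_of_le (Real.exp_pos _) hZ_ge
  have hpH_nonneg : ∀ θ, 0 ≤ pH θ := fun θ => by
    rw [hpH θ]; exact div_nonneg (mul_nonneg (Real.exp_pos _).le (hpn θ)) hZ_pos.le
  have hpH_meas : Measurable pH := by
    have h : pH = fun θ => Real.exp (H θ) * p θ / Z := funext hpH
    rw [h]; exact heHp_meas.div_const Z
  have hpH_int : Integrable pH :=
    (heHp_int.div_const Z).congr (Filter.Eventually.of_forall (fun θ => (hpH θ).symm))
  have hpHint1 : ∫ θ, pH θ = 1 := by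
    calc ∫ θ, pH θ = ∫ θ, Real.exp (H θ) * p θ / Z := by simp only [hpH]
      _ = Z / Z := by rw [integral_div]
      _ = 1 := div_self (ne_of_gt hZ_pos)
  have hexpB : Real.exp B = C * Real.exp (-B) := by
    rw [hC_def, ← Real.exp_add]; ring_nf
  have hbound1 : ∀ θ, pH θ ≤ C * p θ := fun θ => by
    rw [hpH θ, div_le_iff₀ hZ_pos]
    calc Real.exp (H θ) * p θ
        ≤ Real.exp B * p θ := mul_le_mul_of_nonneg_right
          (Real.exp_le_exp.2 (le_of_abs_le (hB θ))) (hpn θ)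
      _ = (C * p θ) * Real.exp (-B) := by rw [hexpB]; ring
      _ ≤ (C * p θ) * Z := mul_le_mul_of_nonneg_left hZ_ge
          (mul_nonneg hC_nonneg (hpn θ))
  have hbound2 : ∀ θ, p θ ≤ C * pH θ := fun θ => by
    have h5 : Z ≤ C * Real.exp (H θ) := by
      refine le_trans hZ_le ?_
      rw [hC_def, ← Real.exp_add]
      exact Real.exp_le_exp.2 (by linarith [neg_le_of_abs_le (hB θ)])
    rw [hpH θ, ← mul_div_assoc, le_div_iff₀ hZ_pos]
    calc p θ * Z ≤ p θ * (C * Real.exp (H θ)) := mul_le_mul_of_nonneg_left h5 (hpn θ)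
      _ = C * (Real.exp (H θ) * p θ) := by ring
  -- now prove the LSI
  intro g hg hint1H hint2H
  have hgm : Measurable g := hg.continuous.measurable
  have hf_meas : Measurable (fun θ => (g θ) ^ 2) := hgm.pow_const 2
  have hgr_meas : Measurable (fun θ => ‖gradient g θ‖ ^ 2) := hs_grad_meas g
  have hent_meas : Measurable (fun θ => (g θ) ^ 2 * Real.log ((g θ) ^ 2)) :=
    hf_meas.mul hf_meas.log
  have hint1p : Integrable (fun θ => p θ * (g θ) ^ 2) :=
    hs_integrable_of_le_mul (hpm.mul hf_meas).aestronglyMeasurable C hint1H (fun θ => by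
      rw [Real.norm_eq_abs, abs_of_nonneg (mul_nonneg (hpn θ) (sq_nonneg _))]
      calc p θ * (g θ) ^ 2 ≤ (C * pH θ) * (g θ) ^ 2 :=
            mul_le_mul_of_nonneg_right (hbound2 θ) (sq_nonneg _)
        _ = C * (pH θ * (g θ) ^ 2) := by ring)
  have hint2p : Integrable (fun θ => p θ * ‖gradient g θ‖ ^ 2) :=
    hs_integrable_of_le_mul (hpm.mul hgr_meas).aestronglyMeasurable C hint2H (fun θ => by
      rw [Real.norm_eq_abs, abs_of_nonneg (mul_nonneg (hpn θ) (sq_nonneg _))]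
      calc p θ * ‖gradient g θ‖ ^ 2 ≤ (C * pH θ) * ‖gradient g θ‖ ^ 2 :=
            mul_le_mul_of_nonneg_right (hbound2 θ) (sq_nonneg _)
        _ = C * (pH θ * ‖gradient g θ‖ ^ 2) := by ring)
  have hentp : Integrable (fun θ => p θ * ((g θ) ^ 2 * Real.log ((g θ) ^ 2))) :=
    hs_entropy_integrable hα hpm hpn hLSI hg hint1p hint2p
  have hentH : Integrable (fun θ => pH θ * ((g θ) ^ 2 * Real.log ((g θ) ^ 2))) :=
    hs_integrable_of_le_mul (hpH_meas.mul hent_meas).aestronglyMeasurable C hentp.abs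
      (fun θ => by
        rw [Real.norm_eq_abs, abs_mul (pH θ) _, abs_of_nonneg (hpH_nonneg θ),
          abs_mul (p θ) _, abs_of_nonneg (hpn θ)]
        calc pH θ * |(g θ) ^ 2 * Real.log ((g θ) ^ 2)|
            ≤ (C * p θ) * |(g θ) ^ 2 * Real.log ((g θ) ^ 2)| :=
              mul_le_mul_of_nonneg_right (hbound1 θ) (abs_nonneg _)
          _ = C * (p θ * |(g θ) ^ 2 * Real.log ((g θ) ^ 2)|) := by ring)
  set aH := ∫ θ, pH θ * (g θ) ^ 2 with haH_def
  set aP := ∫ θ, p θ * (g θ) ^ 2 with haP_def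
  have haH_nonneg : 0 ≤ aH :=
    integral_nonneg fun θ => mul_nonneg (hpH_nonneg θ) (sq_nonneg _)
  have haP_nonneg : 0 ≤ aP :=
    integral_nonneg fun θ => mul_nonneg (hpn θ) (sq_nonneg _)
  have hGH_nonneg : 0 ≤ ∫ θ, pH θ * ‖gradient g θ‖ ^ 2 :=
    integral_nonneg fun θ => mul_nonneg (hpH_nonneg θ) (sq_nonneg _)
  rcases eq_or_lt_of_le haP_nonneg with haP0 | haP_pos
  · -- degenerate case: aP = 0, everything vanishes a.e.
    have hz : (fun θ => p θ * (g θ) ^ 2) =ᵐ[volume] 0 := by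
      rw [← integral_eq_zero_iff_of_nonneg (fun θ => mul_nonneg (hpn θ) (sq_nonneg _)) hint1p]
      exact haP0.symm
    have hzH : (fun θ => pH θ * (g θ) ^ 2) =ᵐ[volume] 0 := by
      filter_upwards [hz] with θ hθ
      simp only [Pi.zero_apply] at hθ ⊢
      rcases mul_eq_zero.mp hθ with h' | h'
      · rw [hpH θ, h']; simp
      · simp [h']
    have h1 : aH = 0 := by rw [haH_def]; exact integral_eq_zero_of_ae hzH
    have h2 : (∫ θ, pH θ * ((g θ) ^ 2 * Real.log ((g θ) ^ 2))) = 0 := by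
      apply integral_eq_zero_of_ae
      filter_upwards [hzH] with θ hθ
      simp only [Pi.zero_apply] at hθ ⊢
      rcases mul_eq_zero.mp hθ with h' | h'
      · simp [h']
      · simp [h']
    rw [h1, h2]
    simp only [zero_mul, mul_zero, Real.log_zero, sub_zero]
    exact mul_nonneg (by positivity) hGH_nonneg
  · -- main case
    set LH := ∫ θ, pH θ * ((g θ) ^ 2 * Real.log ((g θ) ^ 2)) with hLH_def
    set LP := ∫ θ, p θ * ((g θ) ^ 2 * Real.log ((g θ) ^ 2)) with hLP_def
    set GH := ∫ θ, pH θ * ‖gradient g θ‖ ^ 2 with hGH_def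
    set GP := ∫ θ, p θ * ‖gradient g θ‖ ^ 2 with hGP_def
    set φ := fun θ => (g θ) ^ 2 * Real.log ((g θ) ^ 2) - (g θ) ^ 2 * Real.log aP
      - (g θ) ^ 2 + aP with hφ_def
    have hφ_nonneg : ∀ θ, 0 ≤ φ θ := fun θ => by
      have h := hs_mul_log_ineq (sq_nonneg (g θ)) haP_pos
      simp only [hφ_def]; linarith
    have hexpandH : (fun θ => pH θ * φ θ)
        = fun θ => (pH θ * ((g θ) ^ 2 * Real.log ((g θ) ^ 2))
            - Real.log aP * (pH θ * (g θ) ^ 2) - pH θ * (g θ) ^ 2) + aP * pH θ :=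
      funext fun θ => by simp only [hφ_def]; ring
    have hexpandP : (fun θ => p θ * φ θ)
        = fun θ => (p θ * ((g θ) ^ 2 * Real.log ((g θ) ^ 2))
            - Real.log aP * (p θ * (g θ) ^ 2) - p θ * (g θ) ^ 2) + aP * p θ :=
      funext fun θ => by simp only [hφ_def]; ring
    have hintφH : Integrable (fun θ => pH θ * φ θ) := by
      rw [hexpandH]
      exact ((hentH.sub (hint1H.const_mul _)).sub hint1H).add (hpH_int.const_mul _)
    have hintφP : Integrable (fun θ => p θ * φ θ) := by
      rw [hexpandP]
      exact ((hentp.sub (hint1p.const_mul _)).sub hint1p).add (hp_int.const_mul _)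
    have iH2 : Integrable (fun θ => pH θ * ((g θ) ^ 2 * Real.log ((g θ) ^ 2))
        - Real.log aP * (pH θ * (g θ) ^ 2)) volume :=
      hentH.sub (hint1H.const_mul _)
    have iH1 : Integrable (fun θ => pH θ * ((g θ) ^ 2 * Real.log ((g θ) ^ 2))
        - Real.log aP * (pH θ * (g θ) ^ 2) - pH θ * (g θ) ^ 2) volume := iH2.sub hint1H
    have iP2 : Integrable (fun θ => p θ * ((g θ) ^ 2 * Real.log ((g θ) ^ 2))
        - Real.log aP * (p θ * (g θ) ^ 2)) volume :=
      hentp.sub (hint1p.const_mul _)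
    have iP1 : Integrable (fun θ => p θ * ((g θ) ^ 2 * Real.log ((g θ) ^ 2))
        - Real.log aP * (p θ * (g θ) ^ 2) - p θ * (g θ) ^ 2) volume := iP2.sub hint1p
    have eqH : ∫ θ, pH θ * φ θ = LH - aH * Real.log aP - aH + aP := by
      rw [hexpandH, integral_add iH1 (hpH_int.const_mul _), integral_sub iH2 hint1H,
        integral_sub hentH (hint1H.const_mul _), integral_const_mul, integral_const_mul,
        hpHint1]
      rw [← haH_def, ← hLH_def]; ring
    have eqP : ∫ θ, p θ * φ θ = LP - aP * Real.log aP := by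
      rw [hexpandP, integral_add iP1 (hp_int.const_mul _), integral_sub iP2 hint1p,
        integral_sub hentp (hint1p.const_mul _), integral_const_mul, integral_const_mul,
        hpint1]
      rw [← haP_def, ← hLP_def]; ring
    have hmono : ∫ θ, pH θ * φ θ ≤ C * ∫ θ, p θ * φ θ := by
      have h := integral_mono hintφH (hintφP.const_mul C) (fun θ => by
        calc pH θ * φ θ ≤ (C * p θ) * φ θ :=
              mul_le_mul_of_nonneg_right (hbound1 θ) (hφ_nonneg θ)
          _ = C * (p θ * φ θ) := by ring)
      rwa [integral_const_mul] at h
    have hLSIp := hLSI g hg hint1p hint2p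
    have hGle : GP ≤ C * GH := by
      have h := integral_mono hint2p (hint2H.const_mul C) (fun θ => by
        calc p θ * ‖gradient g θ‖ ^ 2 ≤ (C * pH θ) * ‖gradient g θ‖ ^ 2 :=
              mul_le_mul_of_nonneg_right (hbound2 θ) (sq_nonneg _)
          _ = C * (pH θ * ‖gradient g θ‖ ^ 2) := by ring)
      rwa [integral_const_mul] at h
    have hineqA : aH - aP ≤ aH * Real.log aH - aH * Real.log aP :=
      hs_mul_log_ineq haH_nonneg haP_pos
    have hfinal : LH - aH * Real.log aH ≤ C * (2 / α * (C * GH)) := by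
      calc LH - aH * Real.log aH ≤ LH - aH * Real.log aP - aH + aP := by linarith
        _ = ∫ θ, pH θ * φ θ := eqH.symm
        _ ≤ C * ∫ θ, p θ * φ θ := hmono
        _ = C * (LP - aP * Real.log aP) := by rw [eqP]
        _ ≤ C * (2 / α * GP) := mul_le_mul_of_nonneg_left hLSIp hC_nonneg
        _ ≤ C * (2 / α * (C * GH)) := mul_le_mul_of_nonneg_left
            (mul_le_mul_of_nonneg_left hGle (by positivity)) hC_nonneg
    have hconst : C * (2 / α * (C * GH)) = 2 / (α * Real.exp (-4 * B)) * GH := by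
      have hCC : C * C = Real.exp (4 * B) := by rw [hC_def, ← Real.exp_add]; ring_nf
      have hinv : Real.exp (-4 * B) = (Real.exp (4 * B))⁻¹ := by
        rw [show (-4 : ℝ) * B = -(4 * B) by ring, Real.exp_neg]
      have hC_ne : C ≠ 0 := by positivity
      rw [hinv, ← hCC]
      field_simp
    rw [← hconst]
    exact hfinal
end
end

section
/- Let f : ℝ^m × ℝ^n → [−1,1] be measurable with y ↦ f(x,y) being L₀-Lipschitz for every x ∈ ℝ^m. Let p be a probability density on ℝ^m, let X₁, …, X_M be i.i.d. random vectors with density p, and let r, Δ, ρ > 0. Then ℙ[ sup_{‖y‖ ≤ r} |(1/M) ∑_{i=1}^M f(X_i, y) − E_{X∼p}[f(X, y)]| > ρ + 2L₀Δ ] ≤ 2 (1 + 2r/Δ)^n exp(−ρ² M / 2). -/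
/-!
Choose a maximal `Δ`-separated subset `N` of the ball of radius `r`. The balls of radius
`Δ/2` around its points are disjoint and lie in the ball of radius `r + Δ/2`, so comparing
volumes gives `#N ≤ (1 + 2r/Δ)ⁿ`, and by maximality `N` is a `Δ`-net. At each point of `N`,
Hoeffding's inequality bounds the probability that the empirical mean deviates from the
expectation by at least `ρ` by `2 exp (-ρ²M/2)`. The deviation is `2L₀`-Lipschitz in `y`, so
a deviation above `ρ + 2L₀Δ` somewhere in the ball forces a deviation above `ρ` at a net
point; a union bound over `N` concludes.
-/

open MeasureTheory Real ProbabilityTheory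

noncomputable section

open scoped NNReal ENNReal

section Hoeffding

variable {Ω : Type*} [MeasurableSpace Ω] {μ : Measure Ω}

lemma measureReal_abs_sum_ge_le_of_iIndepFun [IsFiniteMeasure μ] {ι : Type*}
    {X : ι → Ω → ℝ} (h_indep : iIndepFun X μ) {c : ι → ℝ≥0} {s : Finset ι}
    (h_subG : ∀ i ∈ s, HasSubgaussianMGF (X i) (c i) μ) {ε : ℝ} (hε : 0 ≤ ε) :
    μ.real {ω | ε ≤ |∑ i ∈ s, X i ω|} ≤ 2 * exp (-ε ^ 2 / (2 * ∑ i ∈ s, c i)) := by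
  have h_neg :
      μ.real {ω | ε ≤ ∑ i ∈ s, (-X i) ω} ≤ exp (-ε ^ 2 / (2 * ∑ i ∈ s, c i)) :=
    HasSubgaussianMGF.measure_sum_ge_le_of_iIndepFun
      (h_indep.comp (fun _ x => -x) fun _ => measurable_neg)
      (fun i hi => (h_subG i hi).neg) hε
  calc μ.real {ω | ε ≤ |∑ i ∈ s, X i ω|}
      ≤ μ.real ({ω | ε ≤ ∑ i ∈ s, X i ω} ∪ {ω | ε ≤ ∑ i ∈ s, (-X i) ω}) := by
        refine measureReal_mono (fun ω hω => ?_)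
        simp only [Set.mem_ofPred_eq, Set.mem_union, Pi.neg_apply,
          Finset.sum_neg_distrib] at hω ⊢
        rcases le_abs'.mp hω with h | h
        · exact Or.inr (by linarith)
        · exact Or.inl h
    _ ≤ _ := (measureReal_union_le _ _).trans <| by
        linarith [HasSubgaussianMGF.measure_sum_ge_le_of_iIndepFun h_indep h_subG hε]

variable [IsProbabilityMeasure μ]

lemma measureReal_abs_sampleMean_sub_integral_ge_le {α : Type*} [MeasurableSpace α] {M : ℕ}
    {X : Fin M → Ω → α} (hX : ∀ i, Measurable (X i)) (h_indep : iIndepFun X μ)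
    {ν : Measure α} (h_law : ∀ i, μ.map (X i) = ν) {g : α → ℝ} (hg : Measurable g)
    (hg_bdd : ∀ x, g x ∈ Set.Icc (-1) 1) {ρ : ℝ} (hρ : 0 ≤ ρ) :
    μ.real {ω | ρ ≤ |(1 / M) * ∑ i, g (X i ω) - ∫ x, g x ∂ν|} ≤
      2 * exp (-ρ ^ 2 * M / 2) := by
  rcases Nat.eq_zero_or_pos M with rfl | hM
  · simpa using (measureReal_le_one (μ := μ)).trans one_le_two
  have h_mean : ∀ i, ∫ ω, g (X i ω) ∂μ = ∫ x, g x ∂ν := fun i => by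
    rw [← h_law i, integral_map (hX i).aemeasurable hg.aestronglyMeasurable]
  have h_subG : ∀ i ∈ Finset.univ,
      HasSubgaussianMGF (fun ω => g (X i ω) - ∫ x, g x ∂ν) 1 μ := fun i _ => by
      have := hasSubgaussianMGF_of_mem_Icc (μ := μ) (X := fun ω => g (X i ω))
        (hg.comp (hX i)).aemeasurable (ae_of_all _ fun ω => hg_bdd (X i ω))
      rw [h_mean] at this
      convert this
      norm_num [← NNReal.coe_inj]
  have hM' : (0 : ℝ) < M := by exact_mod_cast hM
  calc μ.real {ω | ρ ≤ |(1 / M) * ∑ i, g (X i ω) - ∫ x, g x ∂ν|}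
      = μ.real {ω | M * ρ ≤ |∑ i, (g (X i ω) - ∫ x, g x ∂ν)|} := by
        congr 1; ext ω
        rw [Set.mem_ofPred_eq, Set.mem_ofPred_eq, Finset.sum_sub_distrib, Finset.sum_const,
          Finset.card_univ, Fintype.card_fin, nsmul_eq_mul, ← mul_le_mul_iff_of_pos_left hM',
          ← abs_of_pos hM', ← abs_mul, abs_of_pos hM']
        congr! 2
        field_simp
    _ ≤ 2 * exp (-(M * ρ) ^ 2 / (2 * ∑ _i : Fin M, (1 : ℝ≥0))) :=
        measureReal_abs_sum_ge_le_of_iIndepFun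
          (h_indep.comp (fun _ x => g x - ∫ x, g x ∂ν) fun _ => hg.sub_const _) h_subG
          (by positivity)
    _ = 2 * exp (-ρ ^ 2 * M / 2) := by
        congr 2
        simp only [Finset.sum_const, Finset.card_univ, Fintype.card_fin, nsmul_eq_mul, mul_one,
          NNReal.coe_natCast]
        field_simp

end Hoeffding

section Packing

open Metric Module

variable {F : Type*} [NormedAddCommGroup F] [NormedSpace ℝ F] [FiniteDimensional ℝ F]

lemma card_le_of_isSeparated_subset_closedBall {x : F} {r Δ : ℝ} (hr : 0 ≤ r) (hΔ : 0 < Δ)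
    {t : Finset F} (ht : ↑t ⊆ closedBall x r)
    (h_sep : IsSeparated (ENNReal.ofReal Δ) (t : Set F)) :
    (t.card : ℝ) ≤ (1 + 2 * r / Δ) ^ finrank ℝ F := by
  borelize F
  set μ : Measure F := Measure.addHaar
  have hΔ2 : 0 < Δ / 2 := half_pos hΔ
  have h_disj : (t : Set F).PairwiseDisjoint (ball · (Δ / 2)) := by
    intro y hy z hz hyz
    refine Set.disjoint_left.mpr fun w hwy hwz => ?_
    have h_yz : ENNReal.ofReal Δ < edist y z := h_sep hy hz hyz
    rw [edist_dist, ENNReal.ofReal_lt_ofReal_iff_of_nonneg hΔ.le] at h_yz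
    linarith [dist_triangle_right y z w, mem_ball'.mp hwy, mem_ball'.mp hwz]
  have h_union : (⋃ y ∈ t, ball y (Δ / 2)) ⊆ closedBall x (r + Δ / 2) :=
    Set.iUnion₂_subset fun y hy => ball_subset_closedBall.trans <|
      closedBall_subset_closedBall' (by linarith [mem_closedBall.mp (ht hy)])
  have h_vol : (t.card : ℝ≥0∞) * μ (ball x (Δ / 2)) ≤ μ (closedBall x (r + Δ / 2)) :=
    calc (t.card : ℝ≥0∞) * μ (ball x (Δ / 2)) = μ (⋃ y ∈ t, ball y (Δ / 2)) := by
          rw [measure_biUnion_finset h_disj fun _ _ => measurableSet_ball]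
          simp [Measure.addHaar_ball_center μ _ (Δ / 2)]
      _ ≤ μ (closedBall x (r + Δ / 2)) := measure_mono h_union
  rw [Measure.addHaar_ball_of_pos μ x hΔ2, Measure.addHaar_closedBall μ x (by positivity),
    ← mul_assoc, ENNReal.mul_le_mul_iff_left (measure_ball_pos μ 0 one_pos).ne'
      measure_ball_lt_top.ne, ← ENNReal.ofReal_natCast, ← ENNReal.ofReal_mul (by positivity),
    ENNReal.ofReal_le_ofReal_iff (by positivity)] at h_vol
  have h_scale : r + Δ / 2 = (1 + 2 * r / Δ) * (Δ / 2) := by field_simp; ring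
  rw [h_scale, mul_pow] at h_vol
  exact le_of_mul_le_mul_right h_vol (pow_pos hΔ2 _)

lemma exists_finset_dist_le_of_mem_closedBall (x : F) {r Δ : ℝ} (hr : 0 ≤ r) (hΔ : 0 < Δ) :
    ∃ N : Finset F, (N.card : ℝ) ≤ (1 + 2 * r / Δ) ^ finrank ℝ F ∧
      ∀ y ∈ closedBall x r, ∃ z ∈ N, dist y z ≤ Δ := by
  set B := closedBall x r
  set K : ℕ := ⌊(1 + 2 * r / Δ) ^ finrank ℝ F⌋₊
  have h_pack : packingNumber Δ.toNNReal B ≤ K := by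
    refine iSup₂_le fun C hCB => iSup_le fun h_sep => ?_
    by_contra! hK
    obtain ⟨t, htC, ht_card⟩ := Set.exists_subset_encard_eq (Order.add_one_le_of_lt hK)
    have ht_fin : t.Finite := Set.finite_of_encard_eq_coe ht_card
    have := card_le_of_isSeparated_subset_closedBall hr hΔ (t := ht_fin.toFinset)
      (by simpa using htC.trans hCB) (by rw [ht_fin.coe_toFinset]; exact h_sep.subset htC)
    have h_card : ht_fin.toFinset.card = K + 1 := by
      exact_mod_cast ht_fin.encard_eq_coe_toFinset_card.symm.trans ht_card
    rw [h_card, Nat.cast_succ] at this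
    exact (Nat.lt_floor_add_one _).not_ge this
  have h_top : packingNumber Δ.toNNReal B ≠ ⊤ := ne_top_of_le_ne_top (by simp) h_pack
  have h_fin : (maximalSeparatedSet Δ.toNNReal B).Finite := by
    rw [← Set.encard_ne_top_iff, encard_maximalSeparatedSet h_top]; exact h_top
  refine ⟨h_fin.toFinset, card_le_of_isSeparated_subset_closedBall hr hΔ
    (by simpa using maximalSeparatedSet_subset)
    (by rw [h_fin.coe_toFinset]; exact isSeparated_maximalSeparatedSet), fun y hy => ?_⟩
  obtain ⟨z, hz, hyz : edist y z ≤ ENNReal.ofReal Δ⟩ := isCover_maximalSeparatedSet h_top hy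
  refine ⟨z, h_fin.mem_toFinset.mpr hz, ?_⟩
  rwa [edist_dist, ENNReal.ofReal_le_ofReal_iff hΔ.le] at hyz

end Packing

section Lipschitz

variable {α β : Type*} [PseudoMetricSpace β] {f : α → β → ℝ} {K : ℝ≥0}

lemma LipschitzWith.lt_abs_of_add_mul_lt_abs {g : β → ℝ} (hg : LipschitzWith K g) {y z : β}
    {a Δ : ℝ} (hyz : dist y z ≤ Δ) (h : a + K * Δ < |g y|) : a < |g z| := by
  have h_lip : |g y - g z| ≤ K * dist y z := by simpa [Real.dist_eq] using hg.dist_le_mul y z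
  have : K * dist y z ≤ K * Δ := by gcongr
  linarith [abs_sub_abs_le_abs_sub (g y) (g z)]

lemma lipschitzWith_sampleMean (hf : ∀ x, LipschitzWith K (f x)) {M : ℕ} (x : Fin M → α) :
    LipschitzWith K fun y => (1 / M : ℝ) * ∑ i, f (x i) y := by
  refine LipschitzWith.of_dist_le_mul fun y z => ?_
  rw [Real.dist_eq, ← mul_sub, ← Finset.sum_sub_distrib, abs_mul, abs_of_nonneg (by positivity)]
  calc (1 / M : ℝ) * |∑ i, (f (x i) y - f (x i) z)|
      ≤ (1 / M : ℝ) * ∑ _i : Fin M, K * dist y z := by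
        gcongr
        refine (Finset.abs_sum_le_sum_abs _ _).trans (Finset.sum_le_sum fun i _ => ?_)
        simpa [Real.dist_eq] using (hf (x i)).dist_le_mul y z
    _ = ((M : ℝ)⁻¹ * M) * (K * dist y z) := by
        simp only [Finset.sum_const, Finset.card_univ, Fintype.card_fin, nsmul_eq_mul, one_div]
        ring
    _ ≤ K * dist y z := mul_le_of_le_one_left (by positivity) inv_mul_le_one

lemma lipschitzWith_integral [MeasurableSpace α] {ν : Measure α} [IsProbabilityMeasure ν]
    (hf : ∀ x, LipschitzWith K (f x)) (hf_int : ∀ y, Integrable (f · y) ν) :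
    LipschitzWith K fun y => ∫ x, f x y ∂ν := by
  refine LipschitzWith.of_dist_le_mul fun y z => ?_
  rw [dist_eq_norm, ← integral_sub (hf_int y) (hf_int z)]
  simpa using norm_integral_le_of_norm_le_const (μ := ν)
    (ae_of_all _ fun x => (dist_eq_norm (f x y) (f x z)).symm.trans_le ((hf x).dist_le_mul y z))

end Lipschitz

section Density

variable {d : ℕ} {p : E d → ℝ}

lemma IsDensity.isProbabilityMeasure (hp : IsDensity p) :
    IsProbabilityMeasure (volume.withDensity fun θ => ENNReal.ofReal (p θ)) := by
  obtain ⟨-, hp_nonneg, hp_one⟩ := hp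
  constructor
  rw [withDensity_apply _ MeasurableSet.univ, Measure.restrict_univ,
    ← ofReal_integral_eq_lintegral_ofReal (Integrable.of_integral_ne_zero (by simp [hp_one]))
      (ae_of_all _ hp_nonneg), hp_one, ENNReal.ofReal_one]

lemma IsDensity.integral_withDensity (hp : IsDensity p) (g : E d → ℝ) :
    ∫ x, g x ∂(volume.withDensity fun θ => ENNReal.ofReal (p θ)) = ∫ x, g x * p x := by
  rw [integral_withDensity_eq_integral_toReal_smul hp.1.ennreal_ofReal
    (ae_of_all _ fun _ => ENNReal.ofReal_lt_top)]
  congr with x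
  rw [ENNReal.toReal_ofReal (hp.2.1 x), smul_eq_mul, mul_comm]

end Density

/-- Uniform concentration over a ball via covering numbers:
`ℙ[sup_{‖y‖≤r} |(1/M)∑ᵢ f(Xᵢ,y) − E_p[f(X,y)]| > ρ + 2L₀Δ]
  ≤ 2(1 + 2r/Δ)ⁿ exp(−ρ²M/2)`. -/
theorem ball_uniform_concentration (m n M : ℕ) (L0 r Δ ρ : ℝ)
    (hL0 : 0 < L0) (hr : 0 < r) (hΔ : 0 < Δ) (hρ : 0 < ρ)
    (f : E m → E n → ℝ)
    (hf_meas : Measurable (fun z : E m × E n => f z.1 z.2))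
    (hf_bdd : ∀ x y, f x y ∈ Set.Icc (-1 : ℝ) 1)
    (hf_lip : ∀ x, LipschitzWith (Real.toNNReal L0) (fun y => f x y))
    (Ω : Type*) [MeasureSpace Ω] [IsProbabilityMeasure (ℙ : Measure Ω)]
    (p : E m → ℝ) (hp : IsDensity p)
    (X : Fin M → Ω → E m) (hX_meas : ∀ i, Measurable (X i))
    (hiid : iIndepFun X ℙ)
    (hlaw : ∀ i, Measure.map (X i) ℙ
      = volume.withDensity fun θ => ENNReal.ofReal (p θ)) :
    ℙ {ω | ∃ y : E n, ‖y‖ ≤ r ∧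
        ρ + 2 * L0 * Δ <
          |(1 / (M : ℝ)) * ∑ i : Fin M, f (X i ω) y - ∫ x, f x y * p x|}
      ≤ ENNReal.ofReal
          (2 * (1 + 2 * r / Δ) ^ n * Real.exp (-ρ ^ 2 * M / 2)) := by
  set ν := volume.withDensity fun θ => ENNReal.ofReal (p θ)
  have := hp.isProbabilityMeasure
  have hf_sec : ∀ y, Measurable (f · y) := fun y =>
    hf_meas.comp (measurable_id.prodMk measurable_const)
  have hf_int : ∀ y, Integrable (f · y) ν := fun y =>
    .of_mem_Icc (-1) 1 (hf_sec y).aemeasurable (ae_of_all _ (hf_bdd · y))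
  set A : E n → Set Ω :=
    fun z => {ω | ρ ≤ |(1 / M) * ∑ i, f (X i ω) z - ∫ x, f x z ∂ν|}
  have h_A : ∀ z, (ℙ : Measure Ω).real (A z) ≤ 2 * exp (-ρ ^ 2 * M / 2) := fun z =>
    measureReal_abs_sampleMean_sub_integral_ge_le hX_meas hiid hlaw (hf_sec z) (hf_bdd · z) hρ.le
  obtain ⟨N, hN_card, hN⟩ := exists_finset_dist_le_of_mem_closedBall (0 : E n) hr.le hΔ
  rw [finrank_euclideanSpace_fin] at hN_card
  rw [← ofReal_measureReal]
  refine ENNReal.ofReal_le_ofReal ?_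
  calc _ ≤ (ℙ : Measure Ω).real (⋃ z ∈ N, A z) := measureReal_mono ?_ (measure_ne_top _ _)
    _ ≤ ∑ z ∈ N, (ℙ : Measure Ω).real (A z) := measureReal_biUnion_finset_le N A
    _ ≤ N.card * (2 * exp (-ρ ^ 2 * M / 2)) := by
        simpa using Finset.sum_le_card_nsmul N _ _ fun z _ => h_A z
    _ ≤ (1 + 2 * r / Δ) ^ n * (2 * exp (-ρ ^ 2 * M / 2)) := by gcongr
    _ = 2 * (1 + 2 * r / Δ) ^ n * Real.exp (-ρ ^ 2 * M / 2) := by ring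
  rintro ω ⟨y, hy, h_dev⟩
  obtain ⟨z, hzN, hyz⟩ := hN y (mem_closedBall_zero_iff.mpr hy)
  have h_lip :=
    (lipschitzWith_sampleMean hf_lip (X · ω)).sub (lipschitzWith_integral hf_lip hf_int)
  refine Set.mem_biUnion hzN (h_lip.lt_abs_of_add_mul_lt_abs hyz ?_).le
  rw [← hp.integral_withDensity] at h_dev
  convert h_dev using 3
  push_cast [Real.coe_toNNReal _ hL0.le]
  ring
end
end

section
/- Let λ₁, λ₂ > 0 and let f : ℝ^m × ℝ^n → ℝ be measurable with |f(x,y)| ≤ 1 for all (x,y). For a probability density p on ℝ^m define F̂_p(y) = exp(−λ₂^{−1}[−∫ f(x,y) p(x) dx + λ₁‖y‖²]) and Z_p = ∫_{ℝ^n} F̂_p(y) dy. Then for any two probability densities p, p' on ℝ^m: ∫_{ℝ^n} |Z_p^{−1} F̂_p(y) − Z_{p'}^{−1} F̂_{p'}(y)| dy ≤ (2/λ₂) e^{6/λ₂} · ∫_{ℝ^m} |p(x) − p'(x)| dx. In particular the Gibbs best-response map p ↦ Z_p^{−1} F̂_p is L¹-continuous. -/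
open MeasureTheory Real

noncomputable section

/-- The unnormalized Gibbs best response `F̂_p(y) = exp(−λ₂⁻¹[−∫ f(x,y)p(x)dx + λ₁‖y‖²])`. -/
def Fhat {m n : ℕ} (lam1 lam2 : ℝ) (f : E m → E n → ℝ) (p : E m → ℝ) (y : E n) : ℝ :=
  Real.exp (-lam2⁻¹ * (-(∫ x, f x y * p x) + lam1 * ‖y‖ ^ 2))

/-- The normalization constant `Z_p = ∫ F̂_p`. -/
def Zconst {m n : ℕ} (lam1 lam2 : ℝ) (f : E m → E n → ℝ) (p : E m → ℝ) : ℝ :=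
  ∫ y, Fhat lam1 lam2 f p y

lemma gibbs_aux_gauss_int (n : ℕ) (b : ℝ) (hb : 0 < b) :
    Integrable (fun v : E n => Real.exp (-b * ‖v‖ ^ 2)) := by
  have h := (GaussianFourier.integrable_cexp_neg_mul_sq_norm_add (b := (b : ℂ))
    (by simpa using hb) 0 (0 : E n)).norm
  convert h using 2 with v
  simp [Complex.norm_exp, ← Complex.ofReal_pow]

lemma gibbs_aux_exp_lip (a b c : ℝ) (ha : a ≤ c) (hb : b ≤ c) :
    |Real.exp a - Real.exp b| ≤ Real.exp c * |a - b| := by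
  rcases le_total a b with h | h
  · rw [abs_sub_comm, abs_of_nonneg (sub_nonneg.mpr (Real.exp_le_exp.mpr h)),
      abs_sub_comm a b, abs_of_nonneg (sub_nonneg.mpr h)]
    have h1 := Real.add_one_le_exp (a - b)
    have h2 : Real.exp b ≤ Real.exp c := Real.exp_le_exp.mpr hb
    have h3 : Real.exp (a - b) * Real.exp b = Real.exp a := by rw [← Real.exp_add]; ring_nf
    nlinarith [Real.exp_pos b]
  · rw [abs_of_nonneg (sub_nonneg.mpr (Real.exp_le_exp.mpr h)), abs_of_nonneg (sub_nonneg.mpr h)]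
    have h1 := Real.add_one_le_exp (b - a)
    have h2 : Real.exp a ≤ Real.exp c := Real.exp_le_exp.mpr ha
    have h3 : Real.exp (b - a) * Real.exp a = Real.exp b := by rw [← Real.exp_add]; ring_nf
    nlinarith [Real.exp_pos a]

/-- `L¹`-continuity of the Gibbs best-response map:
`‖Z_p⁻¹F̂_p − Z_{p'}⁻¹F̂_{p'}‖_{L¹} ≤ (2/λ₂) e^{6/λ₂} ‖p − p'‖_{L¹}`. -/
theorem gibbs_best_response_L1_continuous (m n : ℕ) (lam1 lam2 : ℝ)
    (hlam1 : 0 < lam1) (hlam2 : 0 < lam2)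
    (f : E m → E n → ℝ)
    (hf_meas : Measurable (fun z : E m × E n => f z.1 z.2))
    (hf_bdd : ∀ x y, |f x y| ≤ 1)
    (p p' : E m → ℝ) (hp : IsDensity p) (hp' : IsDensity p') :
    (∫ y, |(Zconst lam1 lam2 f p)⁻¹ * Fhat lam1 lam2 f p y
        - (Zconst lam1 lam2 f p')⁻¹ * Fhat lam1 lam2 f p' y|)
      ≤ (2 / lam2) * Real.exp (6 / lam2) * ∫ x, |p x - p' x| := by
  obtain ⟨hpm, hp0, hp1⟩ := hp
  obtain ⟨hpm', hp0', hp1'⟩ := hp'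
  have hpint : Integrable p := integrable_of_integral_eq_one hp1
  have hpint' : Integrable p' := integrable_of_integral_eq_one hp1'
  set c := lam2⁻¹ with hc
  have hc0 : 0 < c := inv_pos.mpr hlam2
  set D := ∫ x, |p x - p' x| with hDdef
  have hD0 : 0 ≤ D := integral_nonneg fun x => abs_nonneg _
  set g : (E m → ℝ) → E n → ℝ := fun q y => ∫ x, f x y * q x with hg
  set G : E n → ℝ := fun y => Real.exp (-(lam1 * c) * ‖y‖ ^ 2) with hGdef
  have hGint : Integrable G := gibbs_aux_gauss_int n _ (by positivity)
  have hGpos : ∀ y, 0 < G y := fun y => Real.exp_pos _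
  -- rewrite Fhat
  have hF : ∀ q y, Fhat lam1 lam2 f q y = Real.exp (c * g q y) * G y := by
    intro q y
    rw [Fhat, hGdef, ← Real.exp_add]
    congr 1
    ring
  -- integrability in x
  have hfq_int : ∀ (q : E m → ℝ), Measurable q → Integrable q → (∀ x, 0 ≤ q x) →
      ∀ y, Integrable (fun x => f x y * q x) := by
    intro q hqm hqi hq0 y
    refine Integrable.mono' hqi
      (((hf_meas.comp (measurable_id.prodMk measurable_const)).mul hqm).aestronglyMeasurable)
      (Filter.Eventually.of_forall fun x => ?_)
    rw [Real.norm_eq_abs, abs_mul]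
    calc |f x y| * |q x| ≤ 1 * |q x| :=
          mul_le_mul_of_nonneg_right (hf_bdd x y) (abs_nonneg _)
      _ = q x := by rw [one_mul, abs_of_nonneg (hq0 x)]
  have hfp := hfq_int p hpm hpint hp0
  have hfp' := hfq_int p' hpm' hpint' hp0'
  -- |g q y| ≤ 1
  have hg_bdd : ∀ (q : E m → ℝ), Measurable q → Integrable q → (∀ x, 0 ≤ q x) →
      (∫ x, q x) = 1 → ∀ y, |g q y| ≤ 1 := by
    intro q hqm hqi hq0 hq1 y
    calc |g q y| = ‖∫ x, f x y * q x‖ := (Real.norm_eq_abs _).symm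
      _ ≤ ∫ x, ‖f x y * q x‖ := norm_integral_le_integral_norm _
      _ ≤ ∫ x, q x := by
          refine integral_mono (hfq_int q hqm hqi hq0 y).norm hqi fun x => ?_
          rw [Real.norm_eq_abs, abs_mul]
          calc |f x y| * |q x| ≤ 1 * |q x| :=
                mul_le_mul_of_nonneg_right (hf_bdd x y) (abs_nonneg _)
            _ = q x := by rw [one_mul, abs_of_nonneg (hq0 x)]
      _ = 1 := hq1
  have hgp_bdd := hg_bdd p hpm hpint hp0 hp1
  have hgp'_bdd := hg_bdd p' hpm' hpint' hp0' hp1'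
  -- |g p y - g p' y| ≤ D
  have hgdiff : ∀ y, |g p y - g p' y| ≤ D := by
    intro y
    have h1 : g p y - g p' y = ∫ x, (f x y * p x - f x y * p' x) :=
      (integral_sub (hfp y) (hfp' y)).symm
    rw [h1]
    calc |∫ x, (f x y * p x - f x y * p' x)|
        = ‖∫ x, (f x y * p x - f x y * p' x)‖ := (Real.norm_eq_abs _).symm
      _ ≤ ∫ x, ‖f x y * p x - f x y * p' x‖ := norm_integral_le_integral_norm _
      _ ≤ ∫ x, |p x - p' x| := by
          refine integral_mono ((hfp y).sub (hfp' y)).norm (hpint.sub hpint').abs fun x => ?_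
          rw [Real.norm_eq_abs, ← mul_sub, abs_mul]
          calc |f x y| * |p x - p' x| ≤ 1 * |p x - p' x| :=
                mul_le_mul_of_nonneg_right (hf_bdd x y) (abs_nonneg _)
            _ = |p x - p' x| := one_mul _
  -- measurability of g and Fhat
  have hgm : ∀ (q : E m → ℝ), Measurable q → Measurable (fun y => g q y) := by
    intro q hq
    have h : StronglyMeasurable (fun z : E n × E m => f z.2 z.1 * q z.2) :=
      ((hf_meas.comp (measurable_snd.prodMk measurable_fst)).mul
        (hq.comp measurable_snd)).stronglyMeasurable
    exact h.integral_prod_right'.measurable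
  have hFm : ∀ (q : E m → ℝ), Measurable q → Measurable (Fhat lam1 lam2 f q) := by
    intro q hq
    unfold Fhat
    exact Real.measurable_exp.comp
      ((((hgm q hq).neg.add ((measurable_norm.pow_const 2).const_mul lam1)).const_mul (-lam2⁻¹)))
  -- pointwise bounds on Fhat
  have hFub : ∀ (q : E m → ℝ) y, |g q y| ≤ 1 → Fhat lam1 lam2 f q y ≤ Real.exp c * G y := by
    intro q y hb
    rw [hF]
    refine mul_le_mul_of_nonneg_right (Real.exp_le_exp.mpr ?_) (hGpos y).le
    nlinarith [abs_le.mp hb]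
  have hFlb : ∀ (q : E m → ℝ) y, |g q y| ≤ 1 → Real.exp (-c) * G y ≤ Fhat lam1 lam2 f q y := by
    intro q y hb
    rw [hF]
    refine mul_le_mul_of_nonneg_right (Real.exp_le_exp.mpr ?_) (hGpos y).le
    nlinarith [abs_le.mp hb]
  have hFpos : ∀ (q : E m → ℝ) y, 0 < Fhat lam1 lam2 f q y := fun q y => Real.exp_pos _
  -- integrability of Fhat
  have hFint : ∀ (q : E m → ℝ), Measurable q → (∀ y, |g q y| ≤ 1) →
      Integrable (Fhat lam1 lam2 f q) := by
    intro q hq hb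
    refine Integrable.mono' (hGint.const_mul (Real.exp c)) (hFm q hq).aestronglyMeasurable
      (Filter.Eventually.of_forall fun y => ?_)
    rw [Real.norm_eq_abs, abs_of_pos (hFpos q y)]
    exact hFub q y (hb y)
  have hFintp := hFint p hpm hgp_bdd
  have hFintp' := hFint p' hpm' hgp'_bdd
  set I := ∫ y, G y with hIdef
  have hI0 : 0 < I := by
    rw [hIdef]
    rw [integral_pos_iff_support_of_nonneg (fun y => (hGpos y).le) hGint]
    have hsupp : Function.support G = Set.univ :=
      Set.eq_univ_of_forall fun y => (hGpos y).ne'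
    rw [hsupp]
    exact isOpen_univ.measure_pos volume Set.univ_nonempty
  -- lower bound for Z
  have hZlb : ∀ (q : E m → ℝ), Measurable q → (∀ y, |g q y| ≤ 1) →
      Real.exp (-c) * I ≤ Zconst lam1 lam2 f q := by
    intro q hq hb
    rw [Zconst, hIdef, ← integral_const_mul]
    exact integral_mono (hGint.const_mul _) (hFint q hq hb) fun y => hFlb q y (hb y)
  have hZp0 : 0 < Zconst lam1 lam2 f p :=
    lt_of_lt_of_le (by positivity) (hZlb p hpm hgp_bdd)
  have hZp'0 : 0 < Zconst lam1 lam2 f p' :=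
    lt_of_lt_of_le (by positivity) (hZlb p' hpm' hgp'_bdd)
  set Zp := Zconst lam1 lam2 f p with hZpd
  set Zp' := Zconst lam1 lam2 f p' with hZp'd
  set Fp := Fhat lam1 lam2 f p with hFpd
  set Fp' := Fhat lam1 lam2 f p' with hFp'd
  -- pointwise bound on ΔF
  have hΔ : ∀ y, |Fp y - Fp' y| ≤ (Real.exp c * c * D) * G y := by
    intro y
    rw [hFpd, hFp'd, hF, hF, ← sub_mul, abs_mul, abs_of_pos (hGpos y)]
    have h1 : |Real.exp (c * g p y) - Real.exp (c * g p' y)| ≤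
        Real.exp c * |c * g p y - c * g p' y| := by
      refine gibbs_aux_exp_lip _ _ _ ?_ ?_
      · nlinarith [abs_le.mp (hgp_bdd y)]
      · nlinarith [abs_le.mp (hgp'_bdd y)]
    have h2 : |c * g p y - c * g p' y| = c * |g p y - g p' y| := by
      rw [← mul_sub, abs_mul, abs_of_pos hc0]
    refine mul_le_mul_of_nonneg_right ?_ (hGpos y).le
    calc |Real.exp (c * g p y) - Real.exp (c * g p' y)|
        ≤ Real.exp c * (c * |g p y - g p' y|) := by rw [← h2]; exact h1
      _ ≤ Real.exp c * (c * D) := by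
          refine mul_le_mul_of_nonneg_left
            (mul_le_mul_of_nonneg_left (hgdiff y) hc0.le) (Real.exp_pos c).le
      _ = Real.exp c * c * D := by ring
  set A := ∫ y, |Fp y - Fp' y| with hAdef
  have hΔint : Integrable (fun y => Fp y - Fp' y) := hFintp.sub hFintp'
  have hA : A ≤ Real.exp c * c * D * I := by
    rw [hAdef, hIdef, ← integral_const_mul]
    exact integral_mono hΔint.abs (hGint.const_mul _) hΔ
  have hA0 : 0 ≤ A := integral_nonneg fun y => abs_nonneg _
  have hZdiff : |Zp - Zp'| ≤ A := by
    rw [hZpd, hZp'd, Zconst, Zconst, ← integral_sub hFintp hFintp', hAdef]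
    simpa [Real.norm_eq_abs] using norm_integral_le_integral_norm (fun y => Fp y - Fp' y)
  -- main estimate
  have key : ∀ y, |Zp⁻¹ * Fp y - Zp'⁻¹ * Fp' y| ≤
      Zp⁻¹ * |Fp y - Fp' y| + |Zp⁻¹ - Zp'⁻¹| * Fp' y := by
    intro y
    have h1 : Zp⁻¹ * Fp y - Zp'⁻¹ * Fp' y =
        Zp⁻¹ * (Fp y - Fp' y) + (Zp⁻¹ - Zp'⁻¹) * Fp' y := by ring
    rw [h1]
    calc |Zp⁻¹ * (Fp y - Fp' y) + (Zp⁻¹ - Zp'⁻¹) * Fp' y|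
        ≤ |Zp⁻¹ * (Fp y - Fp' y)| + |(Zp⁻¹ - Zp'⁻¹) * Fp' y| := abs_add_le _ _
      _ = Zp⁻¹ * |Fp y - Fp' y| + |Zp⁻¹ - Zp'⁻¹| * Fp' y := by
          rw [abs_mul, abs_mul, abs_of_pos (inv_pos.mpr hZp0), abs_of_pos (hFpos p' y)]
  have hBint : Integrable (fun y => Zp⁻¹ * |Fp y - Fp' y| + |Zp⁻¹ - Zp'⁻¹| * Fp' y) :=
    (hΔint.abs.const_mul _).add (hFintp'.const_mul _)
  have hmain : (∫ y, |Zp⁻¹ * Fp y - Zp'⁻¹ * Fp' y|) ≤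
      Zp⁻¹ * A + |Zp⁻¹ - Zp'⁻¹| * Zp' := by
    have h := integral_mono_of_nonneg (Filter.Eventually.of_forall fun y => abs_nonneg _)
      hBint (Filter.Eventually.of_forall key)
    rw [integral_add (hΔint.abs.const_mul _) (hFintp'.const_mul _),
      integral_const_mul, integral_const_mul] at h
    exact h
  have h2 : |Zp⁻¹ - Zp'⁻¹| * Zp' ≤ Zp⁻¹ * A := by
    have he : |Zp⁻¹ - Zp'⁻¹| * Zp' = |Zp' - Zp| * Zp⁻¹ := by
      rw [inv_sub_inv hZp0.ne' hZp'0.ne', abs_div, abs_of_pos (mul_pos hZp0 hZp'0)]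
      field_simp
    have h3 : |Zp' - Zp| ≤ A := by rw [abs_sub_comm]; exact hZdiff
    rw [he]
    calc |Zp' - Zp| * Zp⁻¹ ≤ A * Zp⁻¹ := mul_le_mul_of_nonneg_right h3 (inv_pos.mpr hZp0).le
      _ = Zp⁻¹ * A := mul_comm _ _
  have hZinv : Zp⁻¹ ≤ (Real.exp (-c) * I)⁻¹ := by
    exact inv_anti₀ (by positivity) (hZlb p hpm hgp_bdd)
  calc (∫ y, |Zp⁻¹ * Fp y - Zp'⁻¹ * Fp' y|)
      ≤ Zp⁻¹ * A + |Zp⁻¹ - Zp'⁻¹| * Zp' := hmain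
    _ ≤ Zp⁻¹ * A + Zp⁻¹ * A := by linarith
    _ = 2 * (A * Zp⁻¹) := by ring
    _ ≤ 2 * ((Real.exp c * c * D * I) * (Real.exp (-c) * I)⁻¹) := by
        refine mul_le_mul_of_nonneg_left (mul_le_mul hA hZinv (inv_pos.mpr hZp0).le ?_)
          (by norm_num)
        positivity
    _ = 2 * c * (Real.exp c * Real.exp c) * D := by
        rw [Real.exp_neg]
        field_simp
    _ = (2 / lam2) * Real.exp (c + c) * D := by
        rw [Real.exp_add, hc]
        ring
    _ ≤ (2 / lam2) * Real.exp (6 / lam2) * D := by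
        refine mul_le_mul_of_nonneg_right
          (mul_le_mul_of_nonneg_left (Real.exp_le_exp.mpr ?_) (by positivity)) hD0
        rw [hc]
        rw [div_eq_mul_inv]
        nlinarith
end
end

section
/- Let λ₁, λ₂ > 0 and let f : ℝ^m × ℝ^n → ℝ be continuously differentiable in x with |f(x,y)| ≤ 1 for all (x,y) and ‖∇_x f(x,y)‖ ≤ L₀ for all (x,y). Let q be a probability density on ℝ^n and define F(x) = Z^{−1} exp(−λ₂^{−1}[∫ f(x,y) q(y) dy + λ₁‖x‖²]) with Z = ∫_{ℝ^m} exp(−λ₂^{−1}[∫ f(x,y) q(y) dy + λ₁‖x‖²]) dx. Set γ_m = (λ₁/(λ₂ π))^{m/2} e^{2/λ₂}. Then for every x ∈ ℝ^m: F(x) ≤ γ_m · exp(−(λ₁/λ₂)‖x‖²), and ‖∇F(x)‖ ≤ γ_m · (L₀/λ₂ + √(2λ₁/λ₂)). -/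
open MeasureTheory Real

noncomputable section

/-!
Since `q` is a probability density, the mean payoff `g x = ∫ f x y * q y` inherits `|g| ≤ 1`
and, by differentiation under the integral sign, `‖∇g‖ ≤ L₀`. The Gibbs weight
`exp (-λ₂⁻¹ (g x + λ₁ ‖x‖²))` is therefore squeezed between `e^{∓1/λ₂}` times the Gaussian
`exp (-(λ₁/λ₂) ‖x‖²)`, whose integral is `(π λ₂/λ₁)^{m/2}`; this bounds `Z` from below and gives the
pointwise bound. For the gradient, `∇F = -λ₂⁻¹ F (∇g + 2 λ₁ x)`, and the factor `‖x‖` is absorbed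
by the Gaussian decay through `2 a t e^{-a t²} ≤ √a`.
-/

namespace IsDensity

variable {d : ℕ} {q : E d → ℝ}

theorem integrable (hq : IsDensity q) : Integrable q :=
  Integrable.of_integral_ne_zero (by rw [hq.2.2]; exact one_ne_zero)

theorem isProbabilityMeasure_s14 (hq : IsDensity q) :
    IsProbabilityMeasure (volume.withDensity fun y => ENNReal.ofReal (q y)) := by
  constructor
  rw [withDensity_apply _ MeasurableSet.univ, Measure.restrict_univ,
    ← ofReal_integral_eq_lintegral_ofReal hq.integrable (.of_forall hq.2.1), hq.2.2,
    ENNReal.ofReal_one]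

theorem integral_mul_eq_integral_withDensity (hq : IsDensity q) (φ : E d → ℝ) :
    ∫ y, φ y * q y = ∫ y, φ y ∂(volume.withDensity fun y => ENNReal.ofReal (q y)) := by
  rw [integral_withDensity_eq_integral_toReal_smul hq.1.ennreal_ofReal
    (.of_forall fun _ => ENNReal.ofReal_lt_top)]
  simp [ENNReal.toReal_ofReal (hq.2.1 _), mul_comm]

end IsDensity

section ParametricIntegral

variable {α V : Type*} [MeasurableSpace α] [NormedAddCommGroup V] [NormedSpace ℝ V]
  [FiniteDimensional ℝ V]

theorem ContinuousLinearMap.measurable_of_forall_apply {L : α → V →L[ℝ] ℝ}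
    (hL : ∀ v, Measurable fun a => L a v) : Measurable L := by
  let b := Module.finBasis ℝ V
  have hsum : L = fun a => ∑ i, L a (b i) •
      (ContinuousLinearMap.proj i ∘L b.equivFunL.toContinuousLinearMap) := by
    funext a
    ext v
    have hv := congrArg (L a) (b.sum_equivFun v)
    rw [map_sum] at hv
    simpa [mul_comm] using hv.symm
  rw [hsum]
  exact Finset.measurable_sum _ fun i _ => (hL _).smul_const _

theorem measurable_fderiv_of_measurable_param {f : V → α → ℝ} (hf : ∀ x, Measurable (f x))
    {x₀ : V} (hd : ∀ a, DifferentiableAt ℝ (f · a) x₀) :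
    Measurable fun a => fderiv ℝ (f · a) x₀ := by
  refine ContinuousLinearMap.measurable_of_forall_apply fun v => ?_
  refine measurable_of_tendsto_metrizable
    (f := fun (k : ℕ) a => (k : ℝ) • (f (x₀ + (k : ℝ)⁻¹ • v) a - f x₀ a))
    (fun k => by fun_prop) (tendsto_pi_nhds.2 fun a => ?_)
  exact (hd a).hasFDerivAt.lim v (by simpa using tendsto_natCast_atTop_atTop)

theorem hasFDerivAt_integral_of_norm_fderiv_le {μ : Measure α} [IsFiniteMeasure μ]
    {f : V → α → ℝ} {L : ℝ} (hf : ∀ x, Measurable (f x)) {x₀ : V} (hint : Integrable (f x₀) μ)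
    (hd : ∀ a, Differentiable ℝ (f · a)) (hbound : ∀ x a, ‖fderiv ℝ (f · a) x‖ ≤ L) :
    HasFDerivAt (fun x => ∫ a, f x a ∂μ) (∫ a, fderiv ℝ (f · a) x₀ ∂μ) x₀ :=
  hasFDerivAt_integral_of_dominated_of_fderiv_le (bound := fun _ => L) Filter.univ_mem
    (.of_forall fun x => (hf x).aestronglyMeasurable) hint
    (measurable_fderiv_of_measurable_param hf fun a => hd a x₀).aestronglyMeasurable
    (.of_forall fun a x _ => hbound x a) (integrable_const L)
    (.of_forall fun a x _ => (hd a x).hasFDerivAt)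

end ParametricIntegral

theorem two_mul_mul_mul_exp_neg_mul_sq_le_sqrt {a : ℝ} (ha : 0 ≤ a) (t : ℝ) :
    2 * a * t * exp (-a * t ^ 2) ≤ √a := by
  have hamgm : 2 * √a * t ≤ 1 + a * t ^ 2 := by
    nlinarith [sq_nonneg (√a * t - 1), sq_sqrt ha]
  have hexp : 1 + a * t ^ 2 ≤ exp (a * t ^ 2) := by linarith [add_one_le_exp (a * t ^ 2)]
  have hsplit : 2 * a * t = √a * (2 * √a * t) := by
    linear_combination (-2 * t) * mul_self_sqrt ha
  calc 2 * a * t * exp (-a * t ^ 2) = √a * (2 * √a * t) * exp (-(a * t ^ 2)) := by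
        rw [hsplit, neg_mul]
    _ ≤ √a * exp (a * t ^ 2) * exp (-(a * t ^ 2)) := by gcongr; linarith
    _ = √a := by rw [mul_assoc, ← exp_add, add_neg_cancel, exp_zero, mul_one]

section GibbsWeight

variable {V : Type*} [NormedAddCommGroup V] {lam1 lam2 : ℝ} {g : V → ℝ}

def gibbsWeight (lam1 lam2 : ℝ) (g : V → ℝ) (x : V) : ℝ :=
  exp (-lam2⁻¹ * (g x + lam1 * ‖x‖ ^ 2))

theorem gibbsWeight_eq (hlam2 : 0 < lam2) (x : V) :
    gibbsWeight lam1 lam2 g x = exp (-lam2⁻¹ * g x) * exp (-(lam1 / lam2) * ‖x‖ ^ 2) := by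
  rw [gibbsWeight, ← exp_add]
  congr 1
  field_simp
  ring

theorem gibbsWeight_pos (x : V) : 0 < gibbsWeight lam1 lam2 g x :=
  exp_pos _

theorem gibbsWeight_le (hlam2 : 0 < lam2) {x : V} (hg : |g x| ≤ 1) :
    gibbsWeight lam1 lam2 g x ≤ exp lam2⁻¹ * exp (-(lam1 / lam2) * ‖x‖ ^ 2) := by
  rw [gibbsWeight_eq hlam2]
  gcongr
  nlinarith [neg_abs_le (g x), inv_pos.2 hlam2]

theorem exp_neg_inv_mul_le_gibbsWeight (hlam2 : 0 < lam2) {x : V} (hg : |g x| ≤ 1) :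
    exp (-lam2⁻¹) * exp (-(lam1 / lam2) * ‖x‖ ^ 2) ≤ gibbsWeight lam1 lam2 g x := by
  rw [gibbsWeight_eq hlam2]
  gcongr
  nlinarith [le_abs_self (g x), inv_pos.2 hlam2]

end GibbsWeight

section GibbsDensity

variable {V : Type*} [NormedAddCommGroup V] [InnerProductSpace ℝ V] {lam1 lam2 : ℝ} {g : V → ℝ}

theorem norm_gradient [CompleteSpace V] (f : V → ℝ) (x : V) :
    ‖gradient f x‖ = ‖fderiv ℝ f x‖ :=
  (InnerProductSpace.toDual ℝ V).symm.norm_map _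

theorem hasFDerivAt_gibbsWeight {g' : V →L[ℝ] ℝ} {x : V} (hg : HasFDerivAt g g' x) :
    HasFDerivAt (gibbsWeight lam1 lam2 g)
      (gibbsWeight lam1 lam2 g x • -lam2⁻¹ • (g' + (2 * lam1) • innerSL ℝ x)) x := by
  have hnorm : HasFDerivAt (fun x : V => ‖x‖ ^ 2) ((2 : ℝ) • innerSL ℝ x) x := by
    simpa [two_smul] using (hasFDerivAt_id x).norm_sq
  convert ((hg.add (hnorm.const_mul lam1)).const_mul (-lam2⁻¹)).exp using 1
  · funext y
    simp only [gibbsWeight, neg_mul, Pi.add_apply]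
  · simp only [smul_smul, mul_comm lam1 2, gibbsWeight, Pi.add_apply]

theorem norm_fderiv_gibbsWeight_le (hlam1 : 0 ≤ lam1) (hlam2 : 0 < lam2) {g' : V →L[ℝ] ℝ}
    {x : V} (hg : HasFDerivAt g g' x) :
    ‖fderiv ℝ (gibbsWeight lam1 lam2 g) x‖
      ≤ gibbsWeight lam1 lam2 g x * (lam2⁻¹ * (‖g'‖ + 2 * lam1 * ‖x‖)) := by
  rw [(hasFDerivAt_gibbsWeight hg).fderiv, norm_smul, norm_smul, norm_neg,
    Real.norm_of_nonneg (gibbsWeight_pos x).le, Real.norm_of_nonneg (inv_nonneg.2 hlam2.le)]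
  gcongr
  · exact (gibbsWeight_pos x).le
  · refine (norm_add_le g' _).trans_eq ?_
    rw [norm_smul, innerSL_apply_norm, Real.norm_of_nonneg (by positivity)]

variable [FiniteDimensional ℝ V] [MeasurableSpace V] [BorelSpace V]

def gibbsConstant (d : ℕ) (lam1 lam2 : ℝ) : ℝ :=
  (lam1 / (lam2 * π)) ^ ((d : ℝ) / 2) * exp (2 / lam2)

def gibbsDensity (lam1 lam2 : ℝ) (g : V → ℝ) (x : V) : ℝ :=
  (∫ y, gibbsWeight lam1 lam2 g y)⁻¹ * gibbsWeight lam1 lam2 g x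

theorem integrable_exp_neg_mul_sq_norm {b : ℝ} (hb : 0 < b) :
    Integrable fun x : V => exp (-b * ‖x‖ ^ 2) :=
  Integrable.of_integral_ne_zero <| by
    rw [GaussianFourier.integral_rexp_neg_mul_sq_norm hb]
    exact (rpow_pos_of_pos (div_pos pi_pos hb) _).ne'

theorem inv_integral_gibbsWeight_le (hlam1 : 0 < lam1) (hlam2 : 0 < lam2)
    (hg_cont : Continuous g) (hg : ∀ x, |g x| ≤ 1) :
    (∫ x, gibbsWeight lam1 lam2 g x)⁻¹
      ≤ exp lam2⁻¹ * (lam1 / (lam2 * π)) ^ (Module.finrank ℝ V / 2 : ℝ) := by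
  have ha : 0 < lam1 / lam2 := div_pos hlam1 hlam2
  have hgauss := integrable_exp_neg_mul_sq_norm (V := V) ha
  have hlower : exp (-lam2⁻¹) * (π / (lam1 / lam2)) ^ (Module.finrank ℝ V / 2 : ℝ)
      ≤ ∫ x, gibbsWeight lam1 lam2 g x := by
    rw [← GaussianFourier.integral_rexp_neg_mul_sq_norm ha, ← integral_const_mul]
    refine integral_mono (hgauss.const_mul _) ?_
      fun x => exp_neg_inv_mul_le_gibbsWeight hlam2 (hg x)
    refine (hgauss.const_mul (exp lam2⁻¹)).mono' (by unfold gibbsWeight; fun_prop)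
      (.of_forall fun x => ?_)
    rw [Real.norm_of_nonneg (gibbsWeight_pos x).le]
    exact gibbsWeight_le hlam2 (hg x)
  calc (∫ x, gibbsWeight lam1 lam2 g x)⁻¹
      ≤ (exp (-lam2⁻¹) * (π / (lam1 / lam2)) ^ (Module.finrank ℝ V / 2 : ℝ))⁻¹ :=
        inv_anti₀ (by positivity) hlower
    _ = exp lam2⁻¹ * (lam1 / (lam2 * π)) ^ (Module.finrank ℝ V / 2 : ℝ) := by
        rw [mul_inv, ← exp_neg, neg_neg, ← inv_rpow (div_pos pi_pos ha).le, inv_div, div_div]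

theorem gibbsDensity_le (hlam1 : 0 < lam1) (hlam2 : 0 < lam2) (hg_cont : Continuous g)
    (hg : ∀ x, |g x| ≤ 1) (x : V) :
    gibbsDensity lam1 lam2 g x
      ≤ gibbsConstant (Module.finrank ℝ V) lam1 lam2 * exp (-(lam1 / lam2) * ‖x‖ ^ 2) := by
  have h2 : exp (2 / lam2) = exp lam2⁻¹ * exp lam2⁻¹ := by rw [← exp_add]; ring_nf
  calc gibbsDensity lam1 lam2 g x
      ≤ (exp lam2⁻¹ * (lam1 / (lam2 * π)) ^ (Module.finrank ℝ V / 2 : ℝ))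
          * (exp lam2⁻¹ * exp (-(lam1 / lam2) * ‖x‖ ^ 2)) :=
        mul_le_mul (inv_integral_gibbsWeight_le hlam1 hlam2 hg_cont hg)
          (gibbsWeight_le hlam2 (hg x)) (gibbsWeight_pos x).le (by positivity)
    _ = gibbsConstant (Module.finrank ℝ V) lam1 lam2 * exp (-(lam1 / lam2) * ‖x‖ ^ 2) := by
        rw [gibbsConstant, h2]; ring

theorem norm_fderiv_gibbsDensity_le (hlam1 : 0 < lam1) (hlam2 : 0 < lam2)
    (hg_cont : Continuous g) (hg : ∀ x, |g x| ≤ 1) {g' : V →L[ℝ] ℝ} {L : ℝ} {x : V}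
    (hg' : HasFDerivAt g g' x) (hL : ‖g'‖ ≤ L) :
    ‖fderiv ℝ (gibbsDensity lam1 lam2 g) x‖
      ≤ gibbsConstant (Module.finrank ℝ V) lam1 lam2 * (L / lam2 + √(2 * lam1 / lam2)) := by
  set a := lam1 / lam2
  set t := ‖x‖
  have ha : 0 ≤ a := (div_pos hlam1 hlam2).le
  have hL_nonneg : 0 ≤ L := (norm_nonneg _).trans hL
  have hZ : 0 ≤ (∫ y, gibbsWeight lam1 lam2 g y)⁻¹ :=
    inv_nonneg.2 (integral_nonneg fun y => (gibbsWeight_pos y).le)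
  have hsqrt : √a ≤ √(2 * lam1 / lam2) := sqrt_le_sqrt (by rw [mul_div_assoc]; linarith)
  have hdecay : 2 * a * t * exp (-a * t ^ 2) ≤ √a :=
    two_mul_mul_mul_exp_neg_mul_sq_le_sqrt ha t
  have hγ : 0 ≤ gibbsConstant (Module.finrank ℝ V) lam1 lam2 := by
    unfold gibbsConstant; positivity
  calc ‖fderiv ℝ (gibbsDensity lam1 lam2 g) x‖
      = (∫ y, gibbsWeight lam1 lam2 g y)⁻¹ * ‖fderiv ℝ (gibbsWeight lam1 lam2 g) x‖ := by
        unfold gibbsDensity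
        rw [fderiv_const_mul (hasFDerivAt_gibbsWeight hg').differentiableAt,
          norm_smul, Real.norm_of_nonneg hZ]
    _ ≤ (∫ y, gibbsWeight lam1 lam2 g y)⁻¹
          * (gibbsWeight lam1 lam2 g x * (lam2⁻¹ * (L + 2 * lam1 * t))) := by
        gcongr
        refine (norm_fderiv_gibbsWeight_le hlam1.le hlam2 hg').trans ?_
        gcongr
        exact (gibbsWeight_pos x).le
    _ = gibbsDensity lam1 lam2 g x * (L / lam2 + 2 * a * t) := by
        rw [gibbsDensity, show 2 * a * t = lam2⁻¹ * (2 * lam1 * t) by simp only [a]; ring]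
        ring
    _ ≤ gibbsConstant (Module.finrank ℝ V) lam1 lam2 * exp (-a * t ^ 2)
          * (L / lam2 + 2 * a * t) := by
        gcongr
        exact gibbsDensity_le hlam1 hlam2 hg_cont hg x
    _ = gibbsConstant (Module.finrank ℝ V) lam1 lam2
          * (exp (-a * t ^ 2) * (L / lam2) + 2 * a * t * exp (-a * t ^ 2)) := by ring
    _ ≤ gibbsConstant (Module.finrank ℝ V) lam1 lam2
          * (1 * (L / lam2) + √(2 * lam1 / lam2)) := by
        gcongr
        · exact exp_le_one_iff.2 (by nlinarith [sq_nonneg t])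
        · exact hdecay.trans hsqrt
    _ = gibbsConstant (Module.finrank ℝ V) lam1 lam2 * (L / lam2 + √(2 * lam1 / lam2)) := by
        rw [one_mul]

end GibbsDensity

theorem gibbs_best_response_bounds_general (m n : ℕ) (lam1 lam2 L0 : ℝ)
    (hlam1 : 0 < lam1) (hlam2 : 0 < lam2) (f : E m → E n → ℝ)
    (hf_meas : Measurable (fun z : E m × E n => f z.1 z.2))
    (hf_smooth : ∀ y, ContDiff ℝ 1 (fun x => f x y))
    (hf_bdd : ∀ x y, |f x y| ≤ 1)
    (hf_grad : ∀ x y, ‖gradient (fun x' => f x' y) x‖ ≤ L0)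
    (q : E n → ℝ) (hq : IsDensity q)
    (F : E m → ℝ) (Z : ℝ)
    (hZ : Z = ∫ x, Real.exp (-lam2⁻¹ * ((∫ y, f x y * q y) + lam1 * ‖x‖ ^ 2)))
    (hF : ∀ x, F x = Z⁻¹
      * Real.exp (-lam2⁻¹ * ((∫ y, f x y * q y) + lam1 * ‖x‖ ^ 2)))
    (γ : ℝ) (hγ : γ = (lam1 / (lam2 * π)) ^ ((m : ℝ) / 2) * Real.exp (2 / lam2)) :
    ∀ x : E m,
      F x ≤ γ * Real.exp (-(lam1 / lam2) * ‖x‖ ^ 2) ∧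
      ‖gradient F x‖ ≤ γ * (L0 / lam2 + Real.sqrt (2 * lam1 / lam2)) := by
  have := hq.isProbabilityMeasure_s14
  set ν := volume.withDensity fun y => ENNReal.ofReal (q y)
  set g : E m → ℝ := fun x => ∫ y, f x y ∂ν
  have hfy : ∀ x, Measurable (f x) := fun x => hf_meas.comp measurable_prodMk_left
  have hfd : ∀ y, Differentiable ℝ (f · y) := fun y => (hf_smooth y).differentiable one_ne_zero
  have hf_norm : ∀ x y, ‖f x y‖ ≤ 1 := hf_bdd
  have hfd_le : ∀ x y, ‖fderiv ℝ (f · y) x‖ ≤ L0 := fun x y =>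
    norm_gradient _ x ▸ hf_grad x y
  have hg' : ∀ x, HasFDerivAt g (∫ y, fderiv ℝ (f · y) x ∂ν) x := fun x =>
    hasFDerivAt_integral_of_norm_fderiv_le hfy
      (.of_bound (hfy x).aestronglyMeasurable 1 (.of_forall (hf_norm x))) hfd hfd_le
  have hg'_le : ∀ x, ‖∫ y, fderiv ℝ (f · y) x ∂ν‖ ≤ L0 := fun x => by
    simpa using norm_integral_le_of_norm_le_const (μ := ν) (.of_forall (hfd_le x))
  have hg_le : ∀ x, |g x| ≤ 1 := fun x => by
    simpa using norm_integral_le_of_norm_le_const (μ := ν) (.of_forall (hf_norm x))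
  have hg_cont : Continuous g := continuous_iff_continuousAt.2 fun x => (hg' x).continuousAt
  have hFg : F = gibbsDensity lam1 lam2 g := by
    funext x
    rw [hF, hZ]
    simp only [hq.integral_mul_eq_integral_withDensity]
    rfl
  have hγg : γ = gibbsConstant (Module.finrank ℝ (E m)) lam1 lam2 := by
    rw [hγ, finrank_euclideanSpace_fin, gibbsConstant]
  intro x
  rw [hFg, hγg, norm_gradient]
  exact ⟨gibbsDensity_le hlam1 hlam2 hg_cont hg_le x,
    norm_fderiv_gibbsDensity_le hlam1 hlam2 hg_cont hg_le (hg' x) (hg'_le x)⟩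

/-- Pointwise and gradient bounds on the Gibbs best-response density:
`F(x) ≤ γ_m exp(−(λ₁/λ₂)‖x‖²)` and `‖∇F(x)‖ ≤ γ_m (L₀/λ₂ + √(2λ₁/λ₂))`, where
`γ_m = (λ₁/(λ₂π))^{m/2} e^{2/λ₂}`. -/
theorem gibbs_best_response_bounds (m n : ℕ) (lam1 lam2 L0 : ℝ)
    (hlam1 : 0 < lam1) (hlam2 : 0 < lam2) (hL0 : 0 < L0)
    (f : E m → E n → ℝ)
    (hf_meas : Measurable (fun z : E m × E n => f z.1 z.2))
    (hf_smooth : ∀ y, ContDiff ℝ 1 (fun x => f x y))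
    (hf_bdd : ∀ x y, |f x y| ≤ 1)
    (hf_grad : ∀ x y, ‖gradient (fun x' => f x' y) x‖ ≤ L0)
    (q : E n → ℝ) (hq : IsDensity q)
    (F : E m → ℝ) (Z : ℝ)
    (hZ : Z = ∫ x, Real.exp (-lam2⁻¹ * ((∫ y, f x y * q y) + lam1 * ‖x‖ ^ 2)))
    (hF : ∀ x, F x = Z⁻¹
      * Real.exp (-lam2⁻¹ * ((∫ y, f x y * q y) + lam1 * ‖x‖ ^ 2)))
    (γ : ℝ) (hγ : γ = (lam1 / (lam2 * π)) ^ ((m : ℝ) / 2) * Real.exp (2 / lam2)) :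
    ∀ x : E m,
      F x ≤ γ * Real.exp (-(lam1 / lam2) * ‖x‖ ^ 2) ∧
      ‖gradient F x‖ ≤ γ * (L0 / lam2 + Real.sqrt (2 * lam1 / lam2)) :=
  gibbs_best_response_bounds_general m n lam1 lam2 L0 hlam1 hlam2 f hf_meas hf_smooth hf_bdd hf_grad
    q hq F Z hZ hF γ hγ
end
end
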